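/- arXiv:2010.16089 — 2 statements merged into one kernel-verified Lean document; each statement's English description precedes it below -/
import Mathlib

section
/- Let a ≥ n ≥ 0 be integers and let e be a partition of size 2n+2a with exactly 2a parts. Then the C-collapse of e has exactly 2a parts, and ∇(C-collapse of e) equals the D-collapse of ∇(e). -/
/-!
Partitions (Young diagrams) are represented as antitone, eventually-zero
functions `f : ℕ → ℕ`, where `f i` is the length of the `(i+1)`-st row.
-/

/-- `f : ℕ → ℕ` represents a partition (Young diagram). -/
def IsPartition (f : ℕ → ℕ) : Prop :=
  Antitone f ∧ ∃ N, ∀ i, N ≤ i → f i = 0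

/-- The size of a partition: the sum of its parts. -/
noncomputable def size (f : ℕ → ℕ) : ℕ := ∑' i, f i

/-- The sum of the `k` largest parts of a partition. -/
def psum (f : ℕ → ℕ) (k : ℕ) : ℕ := ∑ i ∈ Finset.range k, f i

/-- The multiplicity with which `p` occurs as a part. -/
noncomputable def mult (f : ℕ → ℕ) (p : ℕ) : ℕ := {i | f i = p}.ncard

/-- The transpose (conjugate) partition: `transpose f i` is the length of the
`(i+1)`-st column of `f`. -/
noncomputable def transpose (f : ℕ → ℕ) : ℕ → ℕ := fun i => {j | i < f j}.ncard

/-- The number of parts of a partition (the length of its first column). -/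
noncomputable def numParts (f : ℕ → ℕ) : ℕ := {j | 0 < f j}.ncard

/-- Type B: odd size, and every (positive) even part occurs with even multiplicity. -/
def IsTypeB (f : ℕ → ℕ) : Prop :=
  IsPartition f ∧ Odd (size f) ∧ ∀ p, 0 < p → Even p → Even (mult f p)

/-- Type C: even size, and every odd part occurs with even multiplicity. -/
def IsTypeC (f : ℕ → ℕ) : Prop :=
  IsPartition f ∧ Even (size f) ∧ ∀ p, Odd p → Even (mult f p)

/-- Type D: even size, and every (positive) even part occurs with even multiplicity. -/
def IsTypeD (f : ℕ → ℕ) : Prop :=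
  IsPartition f ∧ Even (size f) ∧ ∀ p, 0 < p → Even p → Even (mult f p)

/-- Dominance order `f ≼ g` between partitions of the same size. -/
def Dom (f g : ℕ → ℕ) : Prop :=
  size f = size g ∧ ∀ k, psum f k ≤ psum g k

/-- `c` is the X-collapse of `d`, where predicate `T` expresses "type X": `c` is
the greatest type-X partition of the same size dominated by `d`. -/
def IsCollapse (T : (ℕ → ℕ) → Prop) (d c : ℕ → ℕ) : Prop :=
  T c ∧ Dom c d ∧ ∀ e, T e → Dom e d → Dom e c

open Classical in
/-- The X-collapse of `d` (junk value if it does not exist). -/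
noncomputable def collapse (T : (ℕ → ℕ) → Prop) (d : ℕ → ℕ) : ℕ → ℕ :=
  if h : ∃ c, IsCollapse T d c then h.choose else fun _ => 0

/-- The B-collapse. -/
noncomputable def collapseB : (ℕ → ℕ) → ℕ → ℕ := collapse IsTypeB

/-- The C-collapse. -/
noncomputable def collapseC : (ℕ → ℕ) → ℕ → ℕ := collapse IsTypeC

/-- The D-collapse. -/
noncomputable def collapseD : (ℕ → ℕ) → ℕ → ℕ := collapse IsTypeD

/-- `d⁺`: add one box to the first row. -/
def boxPlus (f : ℕ → ℕ) : ℕ → ℕ := fun i => if i = 0 then f 0 + 1 else f i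

/-- `d⁻`: remove one box from the last row (for nonempty `d`). -/
noncomputable def boxMinus (f : ℕ → ℕ) : ℕ → ℕ :=
  fun i => if i = numParts f - 1 then f i - 1 else f i

/-- `∇(d)`: remove the first column (every part decreased by 1). -/
def delCol (f : ℕ → ℕ) : ℕ → ℕ := fun i => f i - 1

/-- `∇̌(d)`: remove the first row (delete one largest part). -/
def delRow (f : ℕ → ℕ) : ℕ → ℕ := fun i => f (i + 1)

/-- The metaplectic Lusztig–Spaltenstein map: the D-collapse of the transpose. -/
noncomputable def mLS (d : ℕ → ℕ) : ℕ → ℕ := collapseD (transpose d)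

/-- The map `d̃_SP`: the C-collapse of `(e⁺)⁻`. -/
noncomputable def mSP (e : ℕ → ℕ) : ℕ → ℕ := collapseC (boxMinus (boxPlus e))

/-- The metaplectic Barbasch–Vogan duality. -/
noncomputable def mBV (d : ℕ → ℕ) : ℕ → ℕ := mSP (mLS d)

/-!
Both collapses are computed by one algorithm. Call `f` of type `IsTypeCD ε` if at every drop
`f (k + 1) < f k` the number `psum f (k + 1) + ε * (k + 1)` is even: for `ε = 0` this is type C,
for `ε = 1` type D. At the first drop violating this, move one box from that row `r` down to the
first row `s` shorter than `f r - 1`. Only the partial sums `psum f k` with `r < k ≤ s` go down, and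
these all have `psum f k + ε * k` odd, so no partition of type `IsTypeCD ε` below `f` attains
them: the move keeps the collapse, and iterating it terminates at the collapse.

Since `∇ e` has `2n ≤ 2a` boxes, `e` is `∇ e` with a first column of height `m = 2a` added, and
adding that column raises `psum f k` by `k` for `k ≤ m`. This turns the parity condition for
`ε = 1` into the one for `ε = 0` and moves into moves, so it carries the D-collapse of `∇ e` to
the C-collapse of `e`; both claims follow.
-/

open Finset

section Basic

variable {f g h : ℕ → ℕ}

theorem psum_succ (f : ℕ → ℕ) (k : ℕ) : psum f (k + 1) = psum f k + f k :=
  sum_range_succ f k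

theorem psum_add_of_forall_eq {k t c : ℕ} (hc : ∀ i, k ≤ i → i < k + t → f i = c) :
    psum f (k + t) = psum f k + t * c := by
  rw [psum, psum, sum_range_add,
    sum_congr rfl fun i hi => hc (k + i) (by omega) (by simp only [mem_range] at hi; omega)]
  simp

theorem psum_add_mul_eq_sum (f : ℕ → ℕ) (ε k : ℕ) :
    psum f k + ε * k = ∑ i ∈ range k, (f i + ε) := by
  simp [psum, sum_add_distrib, mul_comm]

theorem size_eq_psum {N : ℕ} (hN : ∀ i, N ≤ i → f i = 0) : size f = psum f N :=
  tsum_eq_sum fun i hi => hN i (by simpa using hi)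

theorem IsPartition.psum_le_size (hf : IsPartition f) (k : ℕ) : psum f k ≤ size f := by
  obtain ⟨N, hN⟩ := hf.2
  rw [size_eq_psum fun i hi => hN i (le_of_max_le_right hi)]
  exact sum_le_sum_of_subset (range_subset_range.mpr (le_max_left k N))

theorem succ_le_psum (hf : Antitone f) {k : ℕ} (hk : 0 < f k) : k + 1 ≤ psum f (k + 1) :=
  calc k + 1 = ∑ _i ∈ range (k + 1), 1 := by simp
    _ ≤ psum f (k + 1) :=
      sum_le_sum fun i hi => hk.trans_le (hf (Nat.lt_succ_iff.mp (mem_range.mp hi)))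

theorem IsPartition.eq_zero_of_size_le (hf : IsPartition f) {i : ℕ} (hi : size f ≤ i) :
    f i = 0 := by
  by_contra h
  have := (succ_le_psum hf.1 (Nat.pos_of_ne_zero h)).trans (hf.psum_le_size _)
  omega

theorem IsPartition.lt_iff_lt_transpose (hf : IsPartition f) (q i : ℕ) :
    q < f i ↔ i < transpose f q := by
  classical
  have hex : ∃ m, f m ≤ q := by
    obtain ⟨N, hN⟩ := hf.2
    exact ⟨N, by simp [hN N le_rfl]⟩
  have hset : {j | q < f j} = ↑(range (Nat.find hex)) := by
    ext j
    simp only [Set.mem_ofPred_eq, coe_range, Set.mem_Iio]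
    refine ⟨fun hj => ?_, fun hj => not_le.mp (Nat.find_min hex hj)⟩
    by_contra hle
    exact (hf.1 (not_lt.mp hle)).trans (Nat.find_spec hex) |>.not_gt hj
  rw [transpose, hset, Set.ncard_coe_finset, card_range]
  simpa using Set.ext_iff.mp hset i

theorem IsPartition.pos_iff_lt_numParts (hf : IsPartition f) (i : ℕ) :
    0 < f i ↔ i < numParts f :=
  hf.lt_iff_lt_transpose 0 i

theorem IsPartition.transpose_apply_succ (hf : IsPartition f) {k : ℕ} (hk : f (k + 1) < f k) :
    transpose f (f (k + 1)) = k + 1 := by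
  have h₁ := (hf.lt_iff_lt_transpose (f (k + 1)) k).mp hk
  have h₂ := (hf.lt_iff_lt_transpose (f (k + 1)) (k + 1)).not.mp (lt_irrefl _)
  omega

theorem Dom.refl (f : ℕ → ℕ) : Dom f f := ⟨rfl, fun _ => le_rfl⟩

theorem Dom.trans (h₁ : Dom f g) (h₂ : Dom g h) : Dom f h :=
  ⟨h₁.1.trans h₂.1, fun k => (h₁.2 k).trans (h₂.2 k)⟩

theorem Dom.antisymm (h₁ : Dom f g) (h₂ : Dom g f) : f = g := by
  have hk : ∀ k, psum f k = psum g k := fun k => le_antisymm (h₁.2 k) (h₂.2 k)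
  funext i
  have := hk (i + 1)
  rw [psum_succ, psum_succ, hk i] at this
  omega

variable {T : (ℕ → ℕ) → Prop} {d c c' : ℕ → ℕ}

theorem isCollapse_self (hT : T f) : IsCollapse T f f := ⟨hT, Dom.refl f, fun _ _ h => h⟩

theorem IsCollapse.unique (hc : IsCollapse T d c) (hc' : IsCollapse T d c') : c = c' :=
  Dom.antisymm (hc'.2.2 c hc.1 hc.2.1) (hc.2.2 c' hc'.1 hc'.2.1)

theorem IsCollapse.collapse_eq (hc : IsCollapse T d c) : collapse T d = c := by
  have hex : ∃ c, IsCollapse T d c := ⟨c, hc⟩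
  rw [collapse, dif_pos hex]
  exact hex.choose_spec.unique hc

end Basic

/-- Types C (`ε = 0`) and D (`ε = 1`), read off at the last row of each block of equal parts
(`isTypeCD_zero`, `isTypeCD_one`). -/
def IsTypeCD (ε : ℕ) (f : ℕ → ℕ) : Prop :=
  IsPartition f ∧ Even (size f) ∧ ∀ k, f (k + 1) < f k → Even (psum f (k + 1) + ε * (k + 1))

section TypeCD

variable {ε : ℕ} {f : ℕ → ℕ}

theorem IsPartition.sum_range_transpose (hf : IsPartition f) (φ : ℕ → ℕ) (q : ℕ) {M : ℕ}
    (hM : f 0 ≤ M) : ∑ i ∈ range (transpose f q), φ (f i) = ∑ p ∈ Ioc q M, φ p * mult f p := by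
  classical
  have hmaps : ∀ i ∈ range (transpose f q), f i ∈ Ioc q M := fun i hi =>
    mem_Ioc.mpr ⟨(hf.lt_iff_lt_transpose q i).mpr (mem_range.mp hi), (hf.1 i.zero_le).trans hM⟩
  rw [← sum_fiberwise_of_maps_to hmaps]
  refine sum_congr rfl fun p hp => ?_
  have hfiber : {i | f i = p} = ↑({i ∈ range (transpose f q) | f i = p}) := by
    ext i
    simp only [Set.mem_ofPred_eq, coe_filter, mem_range, ← hf.lt_iff_lt_transpose]
    have := (mem_Ioc.mp hp).1
    constructor
    · rintro rfl
      exact ⟨this, rfl⟩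
    · exact And.right
  rw [sum_congr rfl fun i hi => by rw [(mem_filter.mp hi).2], sum_const, mult, hfiber,
    Set.ncard_coe_finset, smul_eq_mul, mul_comm]

theorem IsTypeCD.even_psum_transpose (hT : IsTypeCD ε f) (q : ℕ) :
    Even (psum f (transpose f q) + ε * transpose f q) := by
  rcases hk : transpose f q with _ | k
  · simp [psum]
  · apply hT.2.2 k
    have h₁ := (hT.1.lt_iff_lt_transpose q k).mpr (by omega)
    have h₂ := (hT.1.lt_iff_lt_transpose q (k + 1)).not.mpr (by omega)
    omega

theorem IsTypeCD.even_mult (hT : IsTypeCD ε f) {p : ℕ} (hp : 0 < p) (hpε : Odd (p + ε)) :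
    Even (mult f p) := by
  obtain ⟨q, rfl⟩ : ∃ q, p = q + 1 := ⟨p - 1, by omega⟩
  have hsplit := hT.1.sum_range_transpose (· + ε) q (M := f 0 + q + 1) (by omega)
  rw [← sum_Ioc_consecutive _ q.le_succ (by omega), Nat.Ioc_succ_singleton, sum_singleton,
    ← hT.1.sum_range_transpose (· + ε) (q + 1) (by omega), ← psum_add_mul_eq_sum,
    ← psum_add_mul_eq_sum] at hsplit
  have h₁ := hT.even_psum_transpose q
  have h₂ := hT.even_psum_transpose (q + 1)
  have : Even ((q + 1 + ε) * mult f (q + 1)) := by grind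
  exact (Nat.even_mul.mp this).resolve_left (Nat.not_even_iff_odd.mpr hpε)

theorem isTypeCD_of_even_mult (hf : IsPartition f) (hev : Even (size f))
    (hmult : ∀ p, 0 < p → Odd (p + ε) → Even (mult f p)) : IsTypeCD ε f := by
  refine ⟨hf, hev, fun k hk => ?_⟩
  rw [← hf.transpose_apply_succ hk, psum_add_mul_eq_sum,
    hf.sum_range_transpose (· + ε) _ le_rfl]
  refine even_sum _ fun p hp => ?_
  rcases Nat.even_or_odd (p + ε) with h | h
  · exact h.mul_right _
  · exact (hmult p (by simp only [mem_Ioc] at hp; omega) h).mul_left _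

theorem isTypeCD_iff : IsTypeCD ε f ↔
    IsPartition f ∧ Even (size f) ∧ ∀ p, 0 < p → Odd (p + ε) → Even (mult f p) :=
  ⟨fun hT => ⟨hT.1, hT.2.1, fun _ => hT.even_mult⟩,
    fun ⟨hf, hev, hmult⟩ => isTypeCD_of_even_mult hf hev hmult⟩

theorem isTypeCD_zero : IsTypeCD 0 = IsTypeC := by
  funext f
  simp only [isTypeCD_iff, IsTypeC, add_zero, eq_iff_iff]
  exact and_congr_right' <| and_congr_right' ⟨fun h p hp => h p hp.pos hp, fun h p _ => h p⟩

theorem isTypeCD_one : IsTypeCD 1 = IsTypeD := by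
  funext f
  simp only [isTypeCD_iff, IsTypeD, Nat.odd_add_one, Nat.not_odd_iff_even]

end TypeCD

def moveBox (f : ℕ → ℕ) (r s : ℕ) : ℕ → ℕ :=
  fun i => if i = r then f i - 1 else if i = s then f i + 1 else f i

/-- The move lowers exactly the partial sums at `r < k ≤ s`; their parity keeps them out of reach
of every partition of type `IsTypeCD ε` dominated by `f` (`IsStep.psum_lt`). -/
def IsStep (ε : ℕ) (f : ℕ → ℕ) (r s : ℕ) : Prop :=
  r < s ∧ Antitone (moveBox f r s) ∧ ∀ k, r < k → k ≤ s → Odd (psum f k + ε * k)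

noncomputable def psumWeight (f : ℕ → ℕ) : ℕ := ∑ k ∈ range (size f + 1), psum f k

section Step

variable {ε r s : ℕ} {f h : ℕ → ℕ}

theorem psum_moveBox (hrs : r < s) (hr : 1 ≤ f r) (k : ℕ) :
    psum (moveBox f r s) k + (if r < k ∧ k ≤ s then 1 else 0) = psum f k := by
  induction k with
  | zero => simp [psum]
  | succ k ih =>
    rw [psum_succ, psum_succ]
    simp only [moveBox]
    split_ifs at ih ⊢ <;> subst_vars <;> omega

theorem antitone_moveBox (hf : Antitone f) (hrs : r < s) (hs : f s + 2 ≤ f r)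
    (hrun : ∀ i, r < i → i < s → f i = f r - 1) : Antitone (moveBox f r s) := by
  refine antitone_nat_of_succ_le fun i => ?_
  have hi := hf (show i ≤ i + 1 by omega)
  simp only [moveBox]
  split_ifs <;> subst_vars <;>
    first
    | omega
    | (have := hrun i (by omega) (by omega); omega)
    | (have := hrun (i + 1) (by omega) (by omega); omega)

theorem moveBox_apply_of_lt (hrs : r < s) {i : ℕ} (hi : s < i) : moveBox f r s i = f i := by
  simp only [moveBox, if_neg (show i ≠ r by omega), if_neg (show i ≠ s by omega)]

namespace IsStep

theorem two_le (hst : IsStep ε f r s) : 2 ≤ f r := by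
  have := hst.2.1 hst.1.le
  simp [moveBox, hst.1.ne'] at this
  omega

theorem lt_of_succ_eq (hst : IsStep ε f r s) {j : ℕ} (hj : j + 1 = s) : f (j + 1) < f j := by
  have := hst.2.1 (show j ≤ j + 1 by omega)
  have hrs := hst.1
  subst hj
  simp only [moveBox] at this
  split_ifs at this <;> subst_vars <;> omega

theorem isPartition (hst : IsStep ε f r s) (hf : IsPartition f) : IsPartition (moveBox f r s) := by
  obtain ⟨N, hN⟩ := hf.2
  refine ⟨hst.2.1, max N (s + 1), fun i hi => ?_⟩
  rw [moveBox_apply_of_lt hst.1 (by omega)]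
  exact hN i (le_of_max_le_left hi)

theorem size_eq (hst : IsStep ε f r s) (hf : IsPartition f) : size (moveBox f r s) = size f := by
  obtain ⟨N, hN⟩ := hf.2
  have hz : ∀ i, max N (s + 1) ≤ i → f i = 0 := fun i hi => hN i (le_of_max_le_left hi)
  rw [size_eq_psum hz,
    size_eq_psum fun i hi => (moveBox_apply_of_lt hst.1 (by omega)).trans (hz i hi)]
  have := psum_moveBox hst.1 (one_le_two.trans hst.two_le) (max N (s + 1))
  rw [if_neg (by omega)] at this
  exact this

theorem dom (hst : IsStep ε f r s) (hf : IsPartition f) : Dom (moveBox f r s) f := by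
  refine ⟨hst.size_eq hf, fun k => ?_⟩
  have := psum_moveBox hst.1 (one_le_two.trans hst.two_le) k
  omega

theorem psumWeight_lt (hst : IsStep ε f r s) (hf : IsPartition f) :
    psumWeight (moveBox f r s) < psumWeight f := by
  have hr : 1 ≤ f r := one_le_two.trans hst.two_le
  rw [psumWeight, psumWeight, hst.size_eq hf]
  refine sum_lt_sum (fun k _ => by have := psum_moveBox hst.1 hr k; omega) ⟨r + 1, ?_, ?_⟩
  · have := (succ_le_psum hf.1 hr).trans (hf.psum_le_size _)
    simp only [mem_range]
    omega
  · have := psum_moveBox hst.1 hr (r + 1)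
    rw [if_pos ⟨r.lt_succ_self, hst.1⟩] at this
    omega

/-- A partition `h ≼ f` of type `IsTypeCD ε` touching `f` at an odd partial sum cannot drop
there, so it keeps touching `f` one row further down; at `s` this contradicts the drop of `f`. -/
theorem lt_and_psum_succ_eq (hst : IsStep ε f r s) (hf : IsPartition f) (hT : IsTypeCD ε h)
    (hD : Dom h f) {k : ℕ} (hrk : r < k) (hks : k ≤ s) (heq : psum h k = psum f k) :
    k < s ∧ psum h (k + 1) = psum f (k + 1) := by
  obtain ⟨j, rfl⟩ : ∃ j, k = j + 1 := ⟨k - 1, by omega⟩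
  have hodd := hst.2.2 (j + 1) hrk hks
  rw [← heq] at hodd
  have hflat : h j ≤ h (j + 1) :=
    not_lt.mp fun hlt => Nat.not_even_iff_odd.mpr hodd (hT.2.2 j hlt)
  have hfj := hf.1 (show j ≤ j + 1 by omega)
  have h₁ := hD.2 j
  have h₂ := hD.2 (j + 1 + 1)
  have e₁ := psum_succ h j
  have e₂ := psum_succ f j
  have e₃ := psum_succ h (j + 1)
  have e₄ := psum_succ f (j + 1)
  have hrun : f (j + 1) = f j := by omega
  refine ⟨lt_of_le_of_ne hks fun hs => ?_, by omega⟩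
  have := hst.lt_of_succ_eq hs
  omega

theorem psum_lt (hst : IsStep ε f r s) (hf : IsPartition f) (hT : IsTypeCD ε h)
    (hD : Dom h f) {k : ℕ} (hrk : r < k) (hks : k ≤ s) : psum h k < psum f k := by
  refine lt_of_le_of_ne (hD.2 k) ?_
  induction hks using Nat.decreasingInduction with
  | self => exact fun heq => (hst.lt_and_psum_succ_eq hf hT hD hrk le_rfl heq).1.false
  | of_succ k hks ih =>
    exact fun heq => ih (by omega) (hst.lt_and_psum_succ_eq hf hT hD hrk hks.le heq).2

theorem dom_moveBox (hst : IsStep ε f r s) (hf : IsPartition f) (hT : IsTypeCD ε h)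
    (hD : Dom h f) : Dom h (moveBox f r s) := by
  refine ⟨hD.1.trans (hst.size_eq hf).symm, fun k => ?_⟩
  have := psum_moveBox hst.1 (one_le_two.trans hst.two_le) k
  split_ifs at this with hk
  · have := hst.psum_lt hf hT hD hk.1 hk.2
    omega
  · have := hD.2 k
    omega

theorem isCollapse_iff (hst : IsStep ε f r s) (hf : IsPartition f) {c : ℕ → ℕ} :
    IsCollapse (IsTypeCD ε) (moveBox f r s) c ↔ IsCollapse (IsTypeCD ε) f c :=
  ⟨fun ⟨hT, hD, hmax⟩ => ⟨hT, hD.trans (hst.dom hf),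
      fun h hTh hDh => hmax h hTh (hst.dom_moveBox hf hTh hDh)⟩,
    fun ⟨hT, hD, hmax⟩ => ⟨hT, hst.dom_moveBox hf hT hD,
      fun h hTh hDh => hmax h hTh (hDh.trans (hst.dom hf))⟩⟩

end IsStep

end Step

section Algorithm

variable {ε : ℕ} {f : ℕ → ℕ}

/-- The rows equal to `f r` up to row `r` contribute `t * (f r + ε)`, and what comes before them
is even: it is empty or ends at an earlier drop. -/
theorem IsPartition.odd_apply_add {r : ℕ} (hf : IsPartition f)
    (hodd : Odd (psum f (r + 1) + ε * (r + 1)))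
    (hmin : ∀ k < r, f (k + 1) < f k → Even (psum f (k + 1) + ε * (k + 1))) :
    Odd (f r + ε) := by
  set k₀ := transpose f (f r)
  have hk₀ : k₀ ≤ r := not_lt.mp fun h => lt_irrefl _ ((hf.lt_iff_lt_transpose _ r).mpr h)
  obtain ⟨t, ht⟩ : ∃ t, r + 1 = k₀ + t := ⟨r + 1 - k₀, by omega⟩
  have hblock : ∀ i, k₀ ≤ i → i < k₀ + t → f i = f r := fun i h₁ h₂ =>
    le_antisymm (not_lt.mp fun h => by have := (hf.lt_iff_lt_transpose _ i).mp h; omega)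
      (hf.1 (by omega))
  have hbefore : Even (psum f k₀ + ε * k₀) := by
    rcases hk : k₀ with _ | j
    · simp [psum]
    · refine hmin j (by omega) ?_
      have := (hf.lt_iff_lt_transpose (f r) j).mpr (by omega)
      rw [hblock (j + 1) (by omega) (by omega)]
      exact this
  have hsplit : psum f (r + 1) + ε * (r + 1) =
      psum f k₀ + ε * k₀ + t * (f r + ε) := by
    rw [ht, psum_add_of_forall_eq hblock]
    ring
  rw [hsplit] at hodd
  exact (Nat.odd_mul.mp ((Nat.odd_add'.mp hodd).mpr hbefore)).2

theorem IsPartition.exists_isStep (hf : IsPartition f) (hev : Even (size f))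
    (hT : ¬ IsTypeCD ε f) : ∃ r s, IsStep ε f r s := by
  classical
  have hbad : ∃ k, f (k + 1) < f k ∧ Odd (psum f (k + 1) + ε * (k + 1)) := by
    simpa [IsTypeCD, hf, hev] using hT
  obtain ⟨r, ⟨hdrop, hodd⟩, hmin⟩ : ∃ r, (f (r + 1) < f r ∧ Odd (psum f (r + 1) + ε * (r + 1))) ∧
      ∀ k < r, ¬ (f (k + 1) < f k ∧ Odd (psum f (k + 1) + ε * (k + 1))) :=
    ⟨Nat.find hbad, Nat.find_spec hbad, fun k hk => Nat.find_min hbad hk⟩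
  have hrε : Odd (f r + ε) := hf.odd_apply_add hodd fun k hk hd =>
    Nat.not_odd_iff_even.mp fun ho => hmin k hk ⟨hd, ho⟩
  have hr : 2 ≤ f r := by
    by_contra hlt
    have hz : ∀ i, r + 1 ≤ i → f i = 0 := fun i hi => by have := hf.1 hi; omega
    rw [← size_eq_psum hz] at hodd
    rw [show f r = 1 by omega, add_comm] at hrε
    have hε : Even ε := Nat.not_odd_iff_even.mp (Nat.odd_add_one.mp hrε)
    exact Nat.not_even_iff_odd.mpr hodd (hev.add (hε.mul_right _))
  obtain ⟨s, hs⟩ : ∃ s, ∀ i, i < s ↔ f r - 1 ≤ f i :=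
    ⟨transpose f (f r - 2), fun i => (hf.lt_iff_lt_transpose _ i).symm.trans (by omega)⟩
  have hrs : r < s := (hs r).mpr (by omega)
  have hrun : ∀ i, r < i → i < s → f i = f r - 1 := fun i h₁ h₂ => by
    have := hf.1 (show r + 1 ≤ i by omega)
    have := (hs i).mp h₂
    omega
  have hfs : f s + 2 ≤ f r := by
    have := (hs s).not.mp (lt_irrefl s)
    omega
  refine ⟨r, s, hrs, antitone_moveBox hf.1 hrs hfs hrun, fun k hrk hks => ?_⟩
  obtain ⟨t, rfl⟩ : ∃ t, k = r + 1 + t := ⟨k - (r + 1), by omega⟩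
  have hsplit : psum f (r + 1 + t) + ε * (r + 1 + t) =
      psum f (r + 1) + ε * (r + 1) + t * (f r - 1 + ε) := by
    rw [psum_add_of_forall_eq fun i h₁ h₂ => hrun i (by omega) (by omega)]
    ring
  have hstep : Even (f r - 1 + ε) := by
    rw [show f r + ε = f r - 1 + ε + 1 by omega] at hrε
    exact Nat.not_odd_iff_even.mp (Nat.odd_add_one.mp hrε)
  rw [hsplit]
  exact hodd.add_even (hstep.mul_left t)

@[elab_as_elim]
theorem IsTypeCD.induction {P : (ℕ → ℕ) → Prop} (base : ∀ f, IsTypeCD ε f → P f)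
    (step : ∀ f r s, IsPartition f → IsStep ε f r s → P (moveBox f r s) → P f)
    (f : ℕ → ℕ) (hf : IsPartition f) (hev : Even (size f)) : P f := by
  induction f using (measure psumWeight).wf.induction with
  | _ f ih =>
    by_cases hT : IsTypeCD ε f
    · exact base f hT
    obtain ⟨r, s, hst⟩ := hf.exists_isStep hev hT
    exact step f r s hf hst <| ih _ (hst.psumWeight_lt hf) (hst.isPartition hf)
      (hst.size_eq hf ▸ hev)

theorem IsPartition.exists_isCollapse (hf : IsPartition f) (hev : Even (size f)) :
    ∃ c, IsCollapse (IsTypeCD ε) f c :=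
  IsTypeCD.induction (P := fun f => ∃ c, IsCollapse (IsTypeCD ε) f c)
    (fun f hT => ⟨f, isCollapse_self hT⟩)
    (fun _ _ _ hf hst ⟨c, hc⟩ => ⟨c, (hst.isCollapse_iff hf).mp hc⟩) f hf hev

end Algorithm

def addColumn (m : ℕ) (f : ℕ → ℕ) : ℕ → ℕ := fun i => if i < m then f i + 1 else 0

section AddColumn

variable {ε m r s : ℕ} {f g : ℕ → ℕ}

theorem isPartition_addColumn (hf : IsPartition f) : IsPartition (addColumn m f) := by
  refine ⟨antitone_nat_of_succ_le fun i => ?_, m, fun i hi => if_neg (by omega)⟩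
  have := hf.1 (show i ≤ i + 1 by omega)
  simp only [addColumn]
  split_ifs <;> omega

theorem psum_addColumn (hz : ∀ i, m ≤ i → f i = 0) (k : ℕ) :
    psum (addColumn m f) k = psum f k + min k m := by
  induction k with
  | zero => simp [psum]
  | succ k ih =>
    rw [psum_succ, psum_succ, ih, addColumn]
    split_ifs with hk
    · omega
    · rw [hz k (by omega)]
      omega

theorem size_addColumn (hz : ∀ i, m ≤ i → f i = 0) : size (addColumn m f) = size f + m := by
  rw [size_eq_psum hz, size_eq_psum (f := addColumn m f) (N := m) fun i hi => if_neg (by omega),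
    psum_addColumn hz, min_self]

theorem numParts_addColumn : numParts (addColumn m f) = m := by
  have : {j | 0 < addColumn m f j} = ↑(range m) := by
    ext j
    simp only [Set.mem_ofPred_eq, coe_range, Set.mem_Iio, addColumn]
    split_ifs <;> omega
  rw [numParts, this, Set.ncard_coe_finset, card_range]

theorem delCol_addColumn (hz : ∀ i, m ≤ i → f i = 0) : delCol (addColumn m f) = f := by
  funext i
  simp only [delCol, addColumn]
  split_ifs with hi
  · omega
  · rw [hz i (by omega)]

theorem isPartition_delCol (hf : IsPartition f) : IsPartition (delCol f) :=
  ⟨fun _ _ hij => Nat.sub_le_sub_right (hf.1 hij) 1,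
    hf.2.imp fun _ hN i hi => by simp [delCol, hN i hi]⟩

theorem addColumn_numParts_delCol (hf : IsPartition f) :
    addColumn (numParts f) (delCol f) = f := by
  funext i
  have := hf.pos_iff_lt_numParts i
  simp only [addColumn, delCol]
  split_ifs <;> omega

theorem moveBox_addColumn (hrs : r < s) (hsm : s < m) (hr : 1 ≤ f r) :
    addColumn m (moveBox f r s) = moveBox (addColumn m f) r s := by
  funext i
  simp only [addColumn, moveBox]
  split_ifs <;> subst_vars <;> omega

theorem isTypeCD_addColumn (hT : IsTypeCD 1 f) (hfm : size f ≤ m) (hm : Even m) :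
    IsTypeCD 0 (addColumn m f) := by
  have hz : ∀ i, m ≤ i → f i = 0 := fun i hi => hT.1.eq_zero_of_size_le (hfm.trans hi)
  refine ⟨isPartition_addColumn hT.1, size_addColumn hz ▸ hT.2.1.add hm, fun k hk => ?_⟩
  rw [zero_mul, add_zero, psum_addColumn hz]
  by_cases hkm : k + 1 < m
  · have hdrop : f (k + 1) < f k := by simpa [addColumn, hkm, (by omega : k < m)] using hk
    simpa [min_eq_left hkm.le] using hT.2.2 k hdrop
  · rw [min_eq_right (by omega), ← size_eq_psum fun i hi => hz i (by omega)]
    exact hT.2.1.add hm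

theorem IsStep.lt_of_size_le (hst : IsStep ε f r s) (hf : IsPartition f) (hfm : size f ≤ m) :
    s < m := by
  have hpos : 0 < moveBox f r s s := by simp [moveBox, hst.1.ne']
  have := (succ_le_psum hst.2.1 hpos).trans ((hst.isPartition hf).psum_le_size _)
  rw [hst.size_eq hf] at this
  omega

theorem IsStep.addColumn (hst : IsStep 1 f r s) (hf : IsPartition f) (hfm : size f ≤ m) :
    IsStep 0 (addColumn m f) r s := by
  have hsm := hst.lt_of_size_le hf hfm
  have hz : ∀ i, m ≤ i → f i = 0 := fun i hi => hf.eq_zero_of_size_le (hfm.trans hi)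
  refine ⟨hst.1, ?_, fun k hrk hks => ?_⟩
  · rw [← moveBox_addColumn hst.1 hsm (one_le_two.trans hst.two_le)]
    exact (isPartition_addColumn (hst.isPartition hf)).1
  · rw [zero_mul, add_zero, psum_addColumn hz, min_eq_left (by omega)]
    simpa using hst.2.2 k hrk hks

theorem isCollapse_addColumn (hf : IsPartition f) (hev : Even (size f)) (hfm : size f ≤ m)
    (hm : Even m) (hg : IsCollapse (IsTypeCD 1) f g) :
    IsCollapse (IsTypeCD 0) (addColumn m f) (addColumn m g) := by
  suffices size f ≤ m → ∀ g, IsCollapse (IsTypeCD 1) f g →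
      IsCollapse (IsTypeCD 0) (addColumn m f) (addColumn m g) from this hfm g hg
  refine IsTypeCD.induction (ε := 1) ?_ ?_ f hf hev
  · intro f hT hfm g hg
    rw [← (isCollapse_self hT).unique hg]
    exact isCollapse_self (isTypeCD_addColumn hT hfm hm)
  · intro f r s hf hst ih hfm g hg
    have := ih ((hst.size_eq hf).trans_le hfm) g ((hst.isCollapse_iff hf).mpr hg)
    rw [moveBox_addColumn hst.1 (hst.lt_of_size_le hf hfm) (one_le_two.trans hst.two_le)] at this
    exact ((hst.addColumn hf hfm).isCollapse_iff (isPartition_addColumn hf)).mp this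

end AddColumn

/-- for integers `a ≥ n ≥ 0` and a partition `e` of size `2n+2a`
with exactly `2a` parts, the C-collapse of `e` has exactly `2a` parts, and
`∇(C-collapse of e)` equals the D-collapse of `∇(e)`. -/
theorem stmt_10 (a n : ℕ) (han : n ≤ a) (e : ℕ → ℕ)
    (he : IsPartition e) (hsize : size e = 2 * n + 2 * a) (hparts : numParts e = 2 * a) :
    numParts (collapseC e) = 2 * a ∧ delCol (collapseC e) = collapseD (delCol e) := by
  have hcol := addColumn_numParts_delCol he
  rw [hparts] at hcol
  have hf := isPartition_delCol he
  have hz : ∀ i, 2 * a ≤ i → delCol e i = 0 := fun i hi => by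
    have := (he.pos_iff_lt_numParts i).not.mpr (by omega)
    simp only [delCol]
    omega
  have hsf : size (delCol e) = 2 * n := by
    have := size_addColumn hz
    rw [hcol] at this
    omega
  obtain ⟨g, hg⟩ := hf.exists_isCollapse (ε := 1) (hsf ▸ even_two_mul n)
  have hC := isCollapse_addColumn hf (hsf ▸ even_two_mul n) (by omega) (even_two_mul a) hg
  rw [hcol] at hC
  have hgz : ∀ i, 2 * a ≤ i → g i = 0 := fun i hi =>
    hg.1.1.eq_zero_of_size_le (by rw [hg.2.1.1, hsf]; omega)
  rw [isTypeCD_zero] at hC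
  rw [isTypeCD_one] at hg
  rw [collapseC, collapseD, hC.collapse_eq, hg.collapse_eq]
  exact ⟨numParts_addColumn, delCol_addColumn hgz⟩
end

section
/- Let a ≥ n ≥ 0 be integers and let d be a partition of size 2n+2a. If the C-collapse of d has exactly 2a parts, then d has exactly 2a parts. -/
/-!
The C-collapse `c` of `d` is dominated by `d`, so it has at least as many parts as `d`. Conversely,
the most balanced partition of `|d|` into as many parts as `d` is of type C, because `|d|` is even,
and it is dominated by `d`; so it is dominated by `c`, which therefore has at most as many parts.
-/

theorem numParts_eq_of_forall_pos_iff {f : ℕ → ℕ} {m : ℕ} (h : ∀ i, 0 < f i ↔ i < m) :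
    numParts f = m := by
  have hs : {j | 0 < f j} = Set.Iio m := Set.ext h
  rw [numParts, hs, ← Finset.coe_range, Set.ncard_coe_finset, Finset.card_range]

namespace IsPartition

variable {f g : ℕ → ℕ}

theorem pos_iff_lt_numParts_s11 (hf : IsPartition f) (i : ℕ) : 0 < f i ↔ i < numParts f := by
  classical
  obtain ⟨N, hN⟩ := hf.2
  have hzero : ∃ j, f j = 0 := ⟨N, hN N le_rfl⟩
  have hpos : ∀ j, 0 < f j ↔ j < Nat.find hzero := fun j => by
    refine ⟨fun hj => ?_, fun hj => ?_⟩
    · by_contra! h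
      have := hf.1 h
      have := Nat.find_spec hzero
      omega
    · have := Nat.find_min hzero hj
      omega
  rw [numParts_eq_of_forall_pos_iff hpos]
  exact hpos i

theorem size_eq_psum (hf : IsPartition f) {k : ℕ} (hk : numParts f ≤ k) :
    size f = psum f k := by
  refine tsum_eq_sum fun i hi => ?_
  have := hf.pos_iff_lt_numParts_s11 i
  simp only [Finset.mem_range] at hi
  omega

theorem psum_le_size_s11 (hf : IsPartition f) (k : ℕ) : psum f k ≤ size f := by
  rw [hf.size_eq_psum (le_max_right k (numParts f))]
  exact Finset.sum_le_sum_of_subset (Finset.range_subset_range.2 (le_max_left _ _))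

theorem numParts_le_size (hf : IsPartition f) : numParts f ≤ size f := by
  rw [hf.size_eq_psum le_rfl, psum]
  calc numParts f = ∑ _i ∈ Finset.range (numParts f), 1 := by simp
    _ ≤ _ := Finset.sum_le_sum fun i hi =>
      (hf.pos_iff_lt_numParts_s11 i).2 (Finset.mem_range.1 hi)

/-- A partition of `k` parts has its `k` largest parts summing to the whole size, which a
dominating partition can only reach with at most as many parts. -/
theorem numParts_le_of_dom (hf : IsPartition f) (hg : IsPartition g) (h : Dom f g) :
    numParts g ≤ numParts f := by
  by_contra! hlt
  have hpsum_f : psum f (numParts f) = size g := h.1 ▸ (hf.size_eq_psum le_rfl).symm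
  have hpsum_succ : psum g (numParts f + 1) = psum g (numParts f) + g (numParts f) :=
    Finset.sum_range_succ _ _
  have := h.2 (numParts f)
  have := (hg.pos_iff_lt_numParts_s11 _).2 hlt
  have := hg.psum_le_size_s11 (numParts f + 1)
  omega

end IsPartition

/-- Either `d k ≤ q`, and the parts from `k` to `m` sum to at most `(m - k) * q`, or
`d k > q`, and each of the first `k` parts exceeds `q`. -/
theorem Antitone.mul_add_min_le_psum {d : ℕ → ℕ} (hd : Antitone d) {k m q r : ℕ} (hk : k ≤ m)
    (hsum : psum d m = m * q + r) : k * q + min k r ≤ psum d k := by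
  have hsplit : psum d k + ∑ i ∈ Finset.Ico k m, d i = psum d m :=
    Finset.sum_range_add_sum_Ico d hk
  have hhead : k * d k ≤ psum d k := by
    simpa [psum] using Finset.card_nsmul_le_sum (Finset.range k) d (d k)
      fun i hi => hd (Finset.mem_range.1 hi).le
  have htail : ∑ i ∈ Finset.Ico k m, d i ≤ (m - k) * d k := by
    simpa using Finset.sum_le_card_nsmul (Finset.Ico k m) d (d k)
      fun i hi => hd (Finset.mem_Ico.1 hi).1
  rcases le_or_gt (d k) q with hdk | hdk
  · have : (m - k) * d k ≤ (m - k) * q := Nat.mul_le_mul_left _ hdk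
    have : (m - k) * q + k * q = m * q := by rw [← Nat.add_mul, Nat.sub_add_cancel hk]
    omega
  · have : k * (q + 1) ≤ k * d k := Nat.mul_le_mul_left _ hdk
    rw [Nat.mul_succ] at this
    omega

def balanced (m S : ℕ) : ℕ → ℕ :=
  fun i => if i < S % m then S / m + 1 else if i < m then S / m else 0

namespace balanced

variable {m S : ℕ}

theorem isPartition (hm : 0 < m) : IsPartition (balanced m S) := by
  have := Nat.mod_lt S hm
  refine ⟨fun i j hij => ?_, m, fun i hi => ?_⟩
  all_goals
    simp only [balanced]
    generalize S / m = q
    split_ifs <;> omega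

theorem numParts_eq (hm : 0 < m) (hmS : m ≤ S) : numParts (balanced m S) = m := by
  have := Nat.mod_lt S hm
  have := (Nat.one_le_div_iff hm).2 hmS
  refine numParts_eq_of_forall_pos_iff fun i => ?_
  simp only [balanced]
  split_ifs <;> omega

theorem psum_eq {k : ℕ} (hk : k ≤ m) :
    psum (balanced m S) k = k * (S / m) + min k (S % m) := by
  induction k with
  | zero => simp [psum]
  | succ k ih =>
    rw [psum, Finset.sum_range_succ, ← psum, ih (by omega), balanced]
    split_ifs <;> grind

theorem size_eq (hm : 0 < m) : size (balanced m S) = S := by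
  have := Nat.mod_lt S hm
  have hsize : size (balanced m S) = psum (balanced m S) m := tsum_eq_sum fun i hi => by
    simp only [Finset.mem_range] at hi
    simp only [balanced]
    split_ifs <;> omega
  rw [hsize, psum_eq le_rfl, min_eq_right this.le, Nat.div_add_mod]

theorem mult_eq (hm : 0 < m) {p : ℕ} (hp : 0 < p) :
    mult (balanced m S) p =
      if p = S / m + 1 then S % m else if p = S / m then m - S % m else 0 := by
  have := Nat.mod_lt S hm
  have hmult {lo hi : ℕ} (h : ∀ i, balanced m S i = p ↔ lo ≤ i ∧ i < hi) :
      mult (balanced m S) p = hi - lo := by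
    rw [mult, Set.ext h, Set.Ico_def, ← Finset.coe_Ico, Set.ncard_coe_finset, Nat.card_Ico]
  split_ifs with h₁ h₂
  on_goal 1 => show _ = S % m - 0
  on_goal 3 => show _ = 0 - 0
  all_goals refine hmult fun i => ?_
  all_goals
    unfold balanced
    generalize S / m = q at *
    split_ifs <;> omega

theorem isTypeC (hm : 0 < m) (hS : Even S) : IsTypeC (balanced m S) := by
  refine ⟨isPartition hm, (size_eq hm).symm ▸ hS, fun p hp => ?_⟩
  have hS' : S = m * (S / m) + S % m := (Nat.div_add_mod S m).symm
  rw [mult_eq hm hp.pos]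
  split_ifs with h₁ h₂
  · grind
  · grind
  · exact Even.zero

end balanced

theorem IsPartition.balanced_dom {d : ℕ → ℕ} (hd : IsPartition d) (hm : 0 < numParts d) :
    Dom (balanced (numParts d) (size d)) d := by
  refine ⟨balanced.size_eq hm, fun k => ?_⟩
  rcases le_or_gt (numParts d) k with hk | hk
  · calc _ ≤ size (balanced (numParts d) (size d)) := (balanced.isPartition hm).psum_le_size_s11 k
      _ = psum d k := by rw [balanced.size_eq hm, hd.size_eq_psum hk]
  · rw [balanced.psum_eq hk.le]
    refine hd.1.mul_add_min_le_psum hk.le ?_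
    rw [← hd.size_eq_psum le_rfl, Nat.div_add_mod]

theorem isCollapse_collapse {T : (ℕ → ℕ) → Prop} {d : ℕ → ℕ} (h : ∃ c, IsCollapse T d c) :
    IsCollapse T d (collapse T d) := by
  rw [collapse, dif_pos h]
  exact h.choose_spec

theorem numParts_collapse_of_not_exists {T : (ℕ → ℕ) → Prop} {d : ℕ → ℕ}
    (h : ¬∃ c, IsCollapse T d c) : numParts (collapse T d) = 0 := by
  rw [collapse, dif_neg h]
  exact numParts_eq_of_forall_pos_iff fun _ => by simp

theorem IsCollapse.numParts_eq {d c : ℕ → ℕ} (hd : IsPartition d) (hc : IsCollapse IsTypeC d c) :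
    numParts c = numParts d := by
  obtain ⟨⟨hc_part, hc_even, -⟩, hcd, hc_max⟩ := hc
  refine le_antisymm ?_ (hc_part.numParts_le_of_dom hd hcd)
  rcases Nat.eq_zero_or_pos (numParts d) with hm | hm
  · calc numParts c ≤ size c := hc_part.numParts_le_size
      _ = psum d 0 := by rw [hcd.1, hd.size_eq_psum hm.le]
      _ = numParts d := by rw [hm, psum, Finset.sum_range_zero]
  · have hS : Even (size d) := hcd.1 ▸ hc_even
    have hmS : numParts d ≤ size d := hd.numParts_le_size
    have hbal_c := hc_max _ (balanced.isTypeC hm hS) (hd.balanced_dom hm)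
    calc numParts c ≤ numParts (balanced (numParts d) (size d)) :=
          (balanced.isPartition hm).numParts_le_of_dom hc_part hbal_c
      _ = numParts d := balanced.numParts_eq hm hmS

/-- for integers `a ≥ n ≥ 0` and a partition `d` of size `2n+2a`,
if the C-collapse of `d` has exactly `2a` parts, then `d` has exactly `2a`
parts. -/
theorem stmt_11 (a n : ℕ) (han : n ≤ a) (d : ℕ → ℕ)
    (hd : IsPartition d) (hsize : size d = 2 * n + 2 * a)
    (hcol : numParts (collapseC d) = 2 * a) :
    numParts d = 2 * a := by
  by_cases h : ∃ c, IsCollapse IsTypeC d c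
  · rw [← hcol]
    exact ((isCollapse_collapse h).numParts_eq hd).symm
  · -- `collapseC d` is then the junk value `0`, so `a = 0`, hence `n = 0` and `d` is empty.
    have := numParts_collapse_of_not_exists h
    have := hd.numParts_le_size
    rw [collapseC] at hcol
    omega
end
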